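/- arXiv:math/9808143 — 3 statements merged into one kernel-verified Lean document; each statement's English description precedes it below -/
import Mathlib

section
/- For Re(s) > 1, the integral ∫₀^∞ β₁(2v) e^v v^{s-1} dv equals (1/2)Γ(s)[ψ((s+1)/2) − ψ(s/2)], where β₁(t) = ∫₁^∞ u^{-1} e^{-ut} du and ψ = Γ'/Γ is the digamma function. -/
open MeasureTheory Real Set

/-- The exponential integral `β₁(t) = ∫₁^∞ u⁻¹ e^{-ut} du`. -/
noncomputable def beta1 (t : ℝ) : ℝ := ∫ u in Set.Ioi (1 : ℝ), Real.exp (-u * t) / u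

/-- The digamma function `ψ = Γ'/Γ`. -/
noncomputable def digamma (x : ℝ) : ℝ := deriv Real.Gamma x / Real.Gamma x

/-!
Substituting `u = (1 + w) / 2` gives `β₁(2v) eᵛ = ∫₁^∞ e^{-wv} / (1 + w) dw`, and Fubini turns the
Mellin transform into `Γ(s) β(s)` with Nielsen's `β(s) = ∫₁^∞ w^{-s} / (1 + w) dw`. Both `β` and
`(ψ((s+1)/2) - ψ(s/2)) / 2` are nonnegative solutions of `f(s) + f(s+1) = 1/s` on `(0, ∞)`: for the
digamma side this is `ψ(x+1) = ψ(x) + 1/x` together with the monotonicity of `ψ` coming from the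
log-convexity of `Γ`. Such solutions are unique: the difference of two of them changes sign under
`s ↦ s + 1` and is bounded by `1/s`, so it vanishes.
-/

open Filter Topology

theorem eqOn_Ioi_of_apply_add_apply_add_one_eq_inv {f g : ℝ → ℝ}
    (hf : ∀ t, 0 < t → f t + f (t + 1) = t⁻¹) (hg : ∀ t, 0 < t → g t + g (t + 1) = t⁻¹)
    (hf₀ : ∀ t, 0 < t → 0 ≤ f t) (hg₀ : ∀ t, 0 < t → 0 ≤ g t) :
    EqOn f g (Ioi 0) := by
  intro t (ht : 0 < t)
  have shift : ∀ n : ℕ, |f (t + n) - g (t + n)| = |f t - g t| := by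
    intro n
    induction n with
    | zero => simp
    | succ n ih =>
      have htn : 0 < t + n := by positivity
      rw [Nat.cast_succ, ← add_assoc, ← ih, ← abs_neg]
      congr 1
      linarith [hf _ htn, hg _ htn]
  have bound : ∀ x, 0 < x → |f x - g x| ≤ x⁻¹ := by
    intro x hx
    rw [abs_sub_le_iff]
    constructor <;> linarith [hf x hx, hg x hx, hf₀ x hx, hg₀ x hx, hf₀ _ (hx.trans (lt_add_one x)),
      hg₀ _ (hx.trans (lt_add_one x))]
  have decay : Tendsto (fun n : ℕ => (t + n)⁻¹) atTop (𝓝 0) :=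
    (tendsto_atTop_add_const_left _ t tendsto_natCast_atTop_atTop).inv_tendsto_atTop
  have : |f t - g t| ≤ 0 :=
    ge_of_tendsto' decay fun n => shift n ▸ bound _ (by positivity)
  exact sub_eq_zero.mp (abs_nonpos_iff.mp this)

section IoiChangeVariables

variable {E : Type*} [NormedAddCommGroup E] [NormedSpace ℝ E]

theorem integral_comp_sub_right_Ioi (g : ℝ → E) (a c : ℝ) :
    ∫ x in Ioi a, g (x - c) = ∫ x in Ioi (a - c), g x := by
  have := (measurePreserving_sub_right volume c).setIntegral_preimage_emb
    (measurableEmbedding_subRight c) g (Ioi (a - c))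
  rwa [preimage_sub_const_Ioi, sub_add_cancel] at this

theorem integral_comp_mul_sub_Ioi (g : ℝ → E) (a c : ℝ) {b : ℝ} (hb : 0 < b) :
    ∫ x in Ioi a, g (b * x - c) = b⁻¹ • ∫ x in Ioi (b * a - c), g x := by
  rw [integral_comp_mul_left_Ioi (fun y => g (y - c)) a hb, integral_comp_sub_right_Ioi]

end IoiChangeVariables

section Digamma

variable {x : ℝ}

theorem differentiableAt_Gamma_of_pos (hx : 0 < x) : DifferentiableAt ℝ Gamma x :=
  differentiableOn_Gamma_Ioi.differentiableAt (Ioi_mem_nhds hx)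

theorem differentiableAt_log_Gamma (hx : 0 < x) : DifferentiableAt ℝ (log ∘ Gamma) x :=
  (differentiableAt_Gamma_of_pos hx).log (Gamma_pos_of_pos hx).ne'

theorem digamma_eq_deriv_log_Gamma (hx : 0 < x) : digamma x = deriv (log ∘ Gamma) x := by
  rw [Function.comp_def, deriv.log (differentiableAt_Gamma_of_pos hx) (Gamma_pos_of_pos hx).ne']
  rfl

theorem digamma_add_one (hx : 0 < x) : digamma (x + 1) = digamma x + x⁻¹ := by
  have log_Gamma_add_one : (fun y => (log ∘ Gamma) (y + 1)) =ᶠ[𝓝 x] (log ∘ Gamma) + log := by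
    filter_upwards [Ioi_mem_nhds hx] with y (hy : 0 < y)
    simp only [Function.comp_apply, Pi.add_apply, Gamma_add_one hy.ne',
      log_mul hy.ne' (Gamma_pos_of_pos hy).ne', add_comm]
  rw [digamma_eq_deriv_log_Gamma (by linarith), digamma_eq_deriv_log_Gamma hx,
    ← deriv_comp_add_const, log_Gamma_add_one.deriv_eq,
    deriv_add (differentiableAt_log_Gamma hx) (differentiableAt_log hx.ne'), deriv_log]

theorem monotoneOn_digamma : MonotoneOn digamma (Ioi 0) := by
  intro a (ha : 0 < a) b (hb : 0 < b) hab
  rw [digamma_eq_deriv_log_Gamma ha, digamma_eq_deriv_log_Gamma hb]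
  exact convexOn_log_Gamma.monotoneOn_deriv (fun y hy => differentiableAt_log_Gamma hy) ha hb hab

end Digamma

-- Nielsen's beta function, usually written `∫₀¹ t^{s-1} / (1 + t) dt`; here `t = 1 / w`.
noncomputable def nielsenBeta (s : ℝ) : ℝ := ∫ w in Ioi 1, w ^ (-s) / (1 + w)

theorem nielsenBeta_nonneg (s : ℝ) : 0 ≤ nielsenBeta s :=
  setIntegral_nonneg measurableSet_Ioi fun w (hw : 1 < w) => by positivity

theorem integrableOn_rpow_neg_div_one_add {s : ℝ} (hs : 0 < s) :
    IntegrableOn (fun w : ℝ => w ^ (-s) / (1 + w)) (Ioi 1) := by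
  refine (integrableOn_Ioi_rpow_of_lt (by linarith : -s - 1 < -1) one_pos).mono'
    (Measurable.aestronglyMeasurable (by fun_prop)) ?_
  filter_upwards [ae_restrict_mem measurableSet_Ioi] with w (hw : 1 < w)
  have hw₀ : 0 < w := one_pos.trans hw
  rw [norm_of_nonneg (by positivity), rpow_sub hw₀, rpow_one]
  gcongr
  linarith

theorem nielsenBeta_add_nielsenBeta_add_one {s : ℝ} (hs : 0 < s) :
    nielsenBeta s + nielsenBeta (s + 1) = s⁻¹ := by
  have rpow_integral : ∫ w in Ioi (1 : ℝ), w ^ (-(s + 1)) = s⁻¹ := by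
    rw [integral_Ioi_rpow_of_lt (by linarith) one_pos, one_rpow, show -(s + 1) + 1 = -s by ring,
      neg_div_neg_eq, one_div]
  rw [nielsenBeta, nielsenBeta, ← integral_add (integrableOn_rpow_neg_div_one_add hs)
    (integrableOn_rpow_neg_div_one_add (by linarith)), ← rpow_integral]
  refine setIntegral_congr_fun measurableSet_Ioi fun w (hw : 1 < w) => ?_
  have hw₀ : 0 < w := one_pos.trans hw
  have : w ^ (-s) = w ^ (-(s + 1)) * w := by
    rw [← rpow_add_one hw₀.ne']; ring_nf
  rw [this, ← add_div, div_eq_iff (by positivity)]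
  ring

theorem nielsenBeta_eq_digamma_sub {s : ℝ} (hs : 0 < s) :
    nielsenBeta s = (digamma ((s + 1) / 2) - digamma (s / 2)) / 2 := by
  refine eqOn_Ioi_of_apply_add_apply_add_one_eq_inv
    (g := fun t => (digamma ((t + 1) / 2) - digamma (t / 2)) / 2)
    (fun t ht => nielsenBeta_add_nielsenBeta_add_one ht) (fun t ht => ?_)
    (fun t _ => nielsenBeta_nonneg t) (fun t ht => ?_) hs
  · rw [show (t + 1 + 1) / 2 = t / 2 + 1 by ring, digamma_add_one (by positivity)]
    field_simp
    ring
  · have := monotoneOn_digamma (by positivity : 0 < t / 2) (by positivity : 0 < (t + 1) / 2)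
      (by linarith)
    linarith

theorem beta1_two_mul_mul_exp (v : ℝ) :
    beta1 (2 * v) * exp v = ∫ w in Ioi 1, exp (-(w * v)) / (1 + w) := by
  have substitution : ∫ u in Ioi 1, exp (-((2 * u - 1) * v)) / (1 + (2 * u - 1))
      = 2⁻¹ * ∫ w in Ioi 1, exp (-(w * v)) / (1 + w) :=
    (integral_comp_mul_sub_Ioi (fun w => exp (-(w * v)) / (1 + w)) 1 1 two_pos).trans (by norm_num)
  have integrand (u : ℝ) :
      exp (-u * (2 * v)) / u * exp v = 2 * (exp (-((2 * u - 1) * v)) / (1 + (2 * u - 1))) := by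
    rw [div_mul_eq_mul_div, ← exp_add]
    field_simp
    ring_nf
  rw [beta1, ← integral_mul_const]
  simp_rw [integrand]
  rw [integral_const_mul, substitution, ← mul_assoc, mul_inv_cancel₀ two_ne_zero, one_mul]

section Fubini

variable {s : ℝ}

theorem integral_rpow_mul_exp_neg_mul_div_one_add (hs : 0 < s) {w : ℝ} (hw : 0 < w) :
    ∫ v in Ioi 0, v ^ (s - 1) * exp (-(w * v)) / (1 + w) = Gamma s * (w ^ (-s) / (1 + w)) := by
  rw [integral_div, integral_rpow_mul_exp_neg_mul_Ioi hs hw, one_div, inv_rpow hw.le,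
    ← rpow_neg hw.le]
  ring

theorem integrable_rpow_mul_exp_neg_mul_div_one_add (hs : 0 < s) :
    Integrable (fun p : ℝ × ℝ => p.2 ^ (s - 1) * exp (-(p.1 * p.2)) / (1 + p.1))
      ((volume.restrict (Ioi 1)).prod (volume.restrict (Ioi 0))) := by
  rw [integrable_prod_iff (Measurable.aestronglyMeasurable (by fun_prop))]
  constructor
  · filter_upwards [ae_restrict_mem measurableSet_Ioi] with w (hw : 1 < w)
    refine IntegrableOn.congr_fun ((integrableOn_rpow_mul_exp_neg_mul_rpow (s := s - 1)
      (by linarith) one_pos (one_pos.trans hw)).div_const (1 + w)) (fun v _ => ?_) measurableSet_Ioi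
    simp only [rpow_one, neg_mul]
  · refine ((integrableOn_rpow_neg_div_one_add hs).const_mul (Gamma s)).congr ?_
    filter_upwards [ae_restrict_mem measurableSet_Ioi] with w (hw : 1 < w)
    have hw₀ : 0 < w := one_pos.trans hw
    rw [← integral_rpow_mul_exp_neg_mul_div_one_add hs hw₀]
    refine setIntegral_congr_fun measurableSet_Ioi fun v (hv : 0 < v) => ?_
    exact (norm_of_nonneg (by positivity)).symm

theorem integral_integral_exp_div_one_add_mul_rpow (hs : 0 < s) :
    ∫ v in Ioi 0, (∫ w in Ioi 1, exp (-(w * v)) / (1 + w)) * v ^ (s - 1)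
      = Gamma s * nielsenBeta s := calc
  _ = ∫ v in Ioi 0, ∫ w in Ioi 1, v ^ (s - 1) * exp (-(w * v)) / (1 + w) := by
    congr! 2 with v
    rw [← integral_mul_const]
    congr! 2 with w
    ring
  _ = ∫ w in Ioi 1, ∫ v in Ioi 0, v ^ (s - 1) * exp (-(w * v)) / (1 + w) :=
    (integral_integral_swap (integrable_rpow_mul_exp_neg_mul_div_one_add hs)).symm
  _ = ∫ w in Ioi 1, Gamma s * (w ^ (-s) / (1 + w)) :=
    setIntegral_congr_fun measurableSet_Ioi fun w (hw : 1 < w) =>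
      integral_rpow_mul_exp_neg_mul_div_one_add hs (one_pos.trans hw)
  _ = Gamma s * nielsenBeta s := integral_const_mul _ _

end Fubini

theorem stmt0 (s : ℝ) (hs : 1 < s) :
    (∫ v in Set.Ioi (0 : ℝ), beta1 (2 * v) * Real.exp v * v ^ (s - 1))
      = (1 / 2) * Real.Gamma s * (digamma ((s + 1) / 2) - digamma (s / 2)) := by
  simp_rw [beta1_two_mul_mul_exp]
  have hs₀ : 0 < s := by linarith
  rw [integral_integral_exp_div_one_add_mul_rpow hs₀, nielsenBeta_eq_digamma_sub hs₀]
  ring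
end

section
/- For Re(s) > 1, ∫₀^∞ β₁(2v) e^v v^{s-1} dv = Γ(s) ∫₀¹ w^{s-1}/(1+w) dw, where β₁(t) = ∫₁^∞ e^{-ut}/u du. -/
/-!
Writing out `β₁(2v)` turns the left-hand side into the double integral of
`e^{(1-2u)v} v^{s-1} / u` over `v > 0`, `u > 1`; it converges absolutely for `s > 1`, since
integrating the bound `e^{-uv} v^{s-1}` in `u` leaves the Gamma integrand `e^{-v} v^{s-2}`.
Integrating in `v` first gives `Γ(s) (2u-1)^{-s} / u`, and the substitution `u = (1/w + 1)/2`
turns `∫₁^∞ (2u-1)^{-s} du / u` into `∫₀¹ w^{s-1} dw / (1+w)`.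
-/

open MeasureTheory Real Set

noncomputable def beta1MellinKernel (s v u : ℝ) : ℝ := exp ((1 - 2 * u) * v) * v ^ (s - 1) / u

lemma beta1_two_mul_mul_exp_mul_rpow (s v : ℝ) :
    beta1 (2 * v) * exp v * v ^ (s - 1) = ∫ u in Ioi 1, beta1MellinKernel s v u := by
  rw [beta1, ← integral_mul_const, ← integral_mul_const]
  refine setIntegral_congr_fun measurableSet_Ioi fun u _ => ?_
  rw [beta1MellinKernel, show (1 - 2 * u) * v = -u * (2 * v) + v by ring, exp_add]
  ring

lemma measurable_uncurry_beta1MellinKernel (s : ℝ) :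
    Measurable (Function.uncurry (beta1MellinKernel s)) := by
  unfold Function.uncurry beta1MellinKernel
  fun_prop

lemma norm_beta1MellinKernel_le (s : ℝ) {v u : ℝ} (hv : 0 ≤ v) (hu : 1 ≤ u) :
    ‖beta1MellinKernel s v u‖ ≤ exp (-v * u) * v ^ (s - 1) := by
  have hexp : exp ((1 - 2 * u) * v) ≤ exp (-v * u) := exp_le_exp.mpr (by nlinarith)
  rw [beta1MellinKernel, norm_of_nonneg (by positivity)]
  calc exp ((1 - 2 * u) * v) * v ^ (s - 1) / u
      ≤ exp ((1 - 2 * u) * v) * v ^ (s - 1) := div_le_self (by positivity) hu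
    _ ≤ exp (-v * u) * v ^ (s - 1) := by gcongr

lemma integrableOn_exp_neg_mul_mul_rpow_Ioi_one (s : ℝ) {v : ℝ} (hv : 0 < v) :
    IntegrableOn (fun u => exp (-v * u) * v ^ (s - 1)) (Ioi 1) :=
  (integrableOn_exp_mul_Ioi (neg_lt_zero.mpr hv) 1).mul_const _

lemma integral_exp_neg_mul_mul_rpow_Ioi_one (s : ℝ) {v : ℝ} (hv : 0 < v) :
    ∫ u in Ioi 1, exp (-v * u) * v ^ (s - 1) = exp (-v) * v ^ (s - 2) := by
  rw [integral_mul_const, integral_exp_mul_Ioi (neg_lt_zero.mpr hv),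
    show s - 2 = (s - 1) + (-1) by ring, rpow_add hv, rpow_neg_one]
  field_simp

lemma integrableOn_beta1MellinKernel (s : ℝ) {v : ℝ} (hv : 0 < v) :
    IntegrableOn (beta1MellinKernel s v) (Ioi 1) := by
  refine (integrableOn_exp_neg_mul_mul_rpow_Ioi_one s hv).mono'
    ((measurable_uncurry_beta1MellinKernel s).comp measurable_prodMk_left).aestronglyMeasurable ?_
  filter_upwards [ae_restrict_mem measurableSet_Ioi] with u hu
  exact norm_beta1MellinKernel_le s hv.le (le_of_lt hu)

lemma integrable_beta1MellinKernel {s : ℝ} (hs : 1 < s) :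
    Integrable (Function.uncurry (beta1MellinKernel s))
      ((volume.restrict (Ioi 0)).prod (volume.restrict (Ioi 1))) := by
  rw [integrable_prod_iff (measurable_uncurry_beta1MellinKernel s).aestronglyMeasurable]
  refine ⟨?_, ?_⟩
  · filter_upwards [ae_restrict_mem measurableSet_Ioi] with v hv
    exact integrableOn_beta1MellinKernel s hv
  · have hGamma : IntegrableOn (fun v => exp (-v) * v ^ (s - 2)) (Ioi 0) := by
      simpa only [show s - 1 - 1 = s - 2 by ring] using GammaIntegral_convergent (s := s - 1) (by linarith)
    refine hGamma.mono'
      (measurable_uncurry_beta1MellinKernel s).aestronglyMeasurable.norm.integral_prod_right' ?_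
    filter_upwards [ae_restrict_mem measurableSet_Ioi] with v (hv : 0 < v)
    rw [norm_of_nonneg (integral_nonneg fun _ => norm_nonneg _),
      ← integral_exp_neg_mul_mul_rpow_Ioi_one s hv]
    exact setIntegral_mono_on (integrableOn_beta1MellinKernel s hv).norm
      (integrableOn_exp_neg_mul_mul_rpow_Ioi_one s hv) measurableSet_Ioi
      fun u hu => norm_beta1MellinKernel_le s hv.le (le_of_lt hu)

lemma integral_beta1MellinKernel_Ioi_zero {s u : ℝ} (hs : 0 < s) (hu : 1 < u) :
    ∫ v in Ioi 0, beta1MellinKernel s v u = Gamma s * ((2 * u - 1)⁻¹ ^ s / u) := by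
  have hexp : ∀ v, exp ((1 - 2 * u) * v) * v ^ (s - 1) = v ^ (s - 1) * exp (-((2 * u - 1) * v)) :=
    fun v => by rw [mul_comm, neg_mul_eq_neg_mul, neg_sub]
  simp only [beta1MellinKernel, integral_div, hexp]
  rw [integral_rpow_mul_exp_neg_mul_Ioi hs (by linarith), one_div]
  ring

lemma integral_inv_two_mul_sub_one_rpow_div_Ioi_one (s : ℝ) :
    ∫ u in Ioi (1 : ℝ), (2 * u - 1)⁻¹ ^ s / u = ∫ w in Ioo (0 : ℝ) 1, w ^ (s - 1) / (1 + w) := by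
  set f : ℝ → ℝ := fun w => (w⁻¹ + 1) / 2
  have himage : f '' Ioo 0 1 = Ioi 1 := by
    ext u
    simp only [f, mem_image, mem_Ioo, mem_Ioi]
    constructor
    · rintro ⟨w, ⟨hw0, hw1⟩, rfl⟩
      linarith [one_lt_inv_iff₀.mpr ⟨hw0, hw1⟩]
    · intro hu
      refine ⟨(2 * u - 1)⁻¹, ⟨inv_pos.mpr (by linarith), inv_lt_one_of_one_lt₀ (by linarith)⟩, ?_⟩
      rw [inv_inv]; ring
  have hderiv : ∀ w ∈ Ioo (0 : ℝ) 1, HasDerivWithinAt f (-(w ^ 2)⁻¹ / 2) (Ioo 0 1) w :=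
    fun w hw => (((hasDerivAt_inv hw.1.ne').add_const 1).div_const 2).hasDerivWithinAt
  have hinj : InjOn f (Ioo 0 1) := fun w₁ _ w₂ _ h =>
    inv_injective (by simpa [f] using h)
  rw [← himage, integral_image_eq_integral_abs_deriv_smul measurableSet_Ioo hderiv hinj]
  refine setIntegral_congr_fun measurableSet_Ioo fun w ⟨hw0, _⟩ => ?_
  have hws : w ^ s = w ^ (s - 1) * w := by
    rw [← rpow_add_one hw0.ne']; norm_num
  simp only [f, smul_eq_mul, show 2 * ((w⁻¹ + 1) / 2) - 1 = w⁻¹ by ring, inv_inv, abs_div, abs_neg,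
    abs_inv, abs_two, abs_of_pos (pow_pos hw0 2), hws]
  field_simp

theorem stmt3 (s : ℝ) (hs : 1 < s) :
    (∫ v in Set.Ioi (0 : ℝ), beta1 (2 * v) * Real.exp v * v ^ (s - 1))
      = Real.Gamma s * ∫ w in Set.Ioo (0 : ℝ) 1, w ^ (s - 1) / (1 + w) := by
  calc (∫ v in Ioi 0, beta1 (2 * v) * exp v * v ^ (s - 1))
      = ∫ v in Ioi 0, ∫ u in Ioi 1, beta1MellinKernel s v u := by
        simp only [beta1_two_mul_mul_exp_mul_rpow]
    _ = ∫ u in Ioi 1, ∫ v in Ioi 0, beta1MellinKernel s v u :=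
        integral_integral_swap (integrable_beta1MellinKernel hs)
    _ = ∫ u in Ioi 1, Gamma s * ((2 * u - 1)⁻¹ ^ s / u) :=
        setIntegral_congr_fun measurableSet_Ioi fun u hu =>
          integral_beta1MellinKernel_Ioi_zero (by linarith) hu
    _ = Gamma s * ∫ w in Ioo 0 1, w ^ (s - 1) / (1 + w) := by
        rw [integral_const_mul, integral_inv_two_mul_sub_one_rpow_div_Ioi_one]
end

section
/- Let k be an imaginary quadratic field, p₀ a split prime of ℚ in k with p₀O_k = ℘₀℘̄₀. In the quaternion setup B = k ⊕ ky with y² = −κ, the lattices R' = O_k ⊕ ℘₀^{−1}y and R'' = O_k ⊕ ℘̄₀^{−1}y are orders of B containing R = O_k ⊕ O_k y, and no single order of B contains both R' and R''; indeed Q(p₀^{−1}y) = κ/p₀² ∉ ℤ. -/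
open NumberField

/-- `I⁻¹ = {b ∈ k : b·I ⊆ 𝓞ₖ}` for an integral ideal `I`, as a subset of `k`. -/
def idealInvSet (k : Type*) [Field k] [NumberField k] (I : Ideal (𝓞 k)) : Set k :=
  {b : k | ∀ c ∈ I, ∃ d : 𝓞 k, b * algebraMap (𝓞 k) k c = algebraMap (𝓞 k) k d}

/-- The lattice `𝓞ₖ ⊕ S·y` inside `B = k ⊕ k·y`. -/
def latticeSet {k : Type*} [Field k] [NumberField k] {B : Type*} [Ring B] [Algebra ℚ B]
    (f : k →ₐ[ℚ] B) (y : B) (S : Set k) : Set B :=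
  {x : B | ∃ (a : 𝓞 k) (b : k), b ∈ S ∧ x = f (algebraMap (𝓞 k) k a) + f b * y}

/-!
For `b, d ∈ ℘₀⁻¹` the conjugate `σ d` lies in `℘̄₀⁻¹`, so
`κ b σ(d) ∈ κ ℘₀⁻¹℘̄₀⁻¹ = (κ / p₀) 𝓞ₖ ⊆ 𝓞ₖ`; by the rule
`(a + b y)(c + d y) = (ac - κ b σd) + (ad + b σc) y` this makes `R'` (and likewise `R''`) a ring.
Each `x = a + b y` is a root of `X² - (a + σa) X + (a σa + κ b σb)`, whose coefficients are
`σ`-invariant algebraic integers of the quadratic field `k`, hence rational integers.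
Finally `℘₀ + ℘̄₀ = 𝓞ₖ`, say `w + z = 1` with `w ∈ ℘₀`, `z ∈ ℘̄₀`, so
`p₀⁻¹ y = (z / p₀) y + (w / p₀) y ∈ R' + R''`; but `(p₀⁻¹ y)² = -κ / p₀²` is not an integer.
-/

theorem mem_range_algebraMap_of_algEquiv_apply_eq {F K : Type*} [Field F] [Field K] [Algebra F K]
    (hK : (Module.finrank F K).Prime) {σ : K ≃ₐ[F] K} (hσ : σ ≠ AlgEquiv.refl) {c : K}
    (hc : σ c = c) : c ∈ Set.range (algebraMap F K) := by
  have := Subalgebra.isSimpleOrder_of_finrank_prime F K hK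
  rcases eq_bot_or_eq_top (Algebra.adjoin F {c}) with h | h
  · exact Algebra.mem_bot.mp (h ▸ Algebra.self_mem_adjoin_singleton F c)
  · refine absurd (AlgEquiv.coe_toAlgHom_injective ?_) hσ
    exact AlgHom.ext_of_adjoin_eq_top h (by simpa using hc)

theorem exists_intCast_eq_of_isIntegral_algebraMap {B : Type*} [Ring B] [Nontrivial B]
    [Algebra ℚ B] {q : ℚ} (h : IsIntegral ℤ (algebraMap ℚ B q)) : ∃ n : ℤ, q = n := by
  rw [isIntegral_algebraMap_iff (algebraMap ℚ B).injective] at h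
  obtain ⟨n, rfl⟩ := IsIntegrallyClosed.isIntegral_iff.mp h
  exact ⟨n, eq_intCast _ n⟩

theorem exists_intCast_eq_of_algEquiv_apply_eq {K : Type*} [Field K] [Algebra ℚ K]
    (hK : Module.finrank ℚ K = 2) {σ : K ≃ₐ[ℚ] K} (hσ : σ ≠ AlgEquiv.refl) {c : K}
    (hc : σ c = c) (hint : IsIntegral ℤ c) : ∃ n : ℤ, c = n := by
  obtain ⟨q, rfl⟩ := mem_range_algebraMap_of_algEquiv_apply_eq (hK ▸ Nat.prime_two) hσ hc
  obtain ⟨n, rfl⟩ := exists_intCast_eq_of_isIntegral_algebraMap hint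
  exact ⟨n, map_intCast _ n⟩

open Polynomial in
theorem isIntegral_of_mul_self_eq {B : Type*} [Ring B] {x : B} (t n : ℤ)
    (hx : x * x = t * x - n) : IsIntegral ℤ x := by
  refine ⟨X ^ 2 + (C (-t) * X + C n), monic_X_pow_add (degree_linear_le.trans_lt (by norm_num)), ?_⟩
  rw [eval₂_add, eval₂_add, eval₂_X_pow, eval₂_mul_X, eval₂_C, eval₂_C, pow_two, hx]
  simp

theorem intCast_div_sq_ne_intCast {p κ : ℤ} (hp : p ≠ 0) (h : ¬ p ^ 2 ∣ κ) (n : ℤ) :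
    (κ : ℚ) / (p : ℚ) ^ 2 ≠ n := by
  rw [Ne, div_eq_iff (by positivity)]
  exact fun hn => h ⟨n, by rw [mul_comm]; exact_mod_cast hn⟩

theorem Ideal.exists_add_eq_one_of_not_le {R : Type*} [CommRing R] {P Q : Ideal R}
    (hP : P.IsMaximal) (h : ¬ Q ≤ P) : ∃ w ∈ P, ∃ z ∈ Q, w + z = 1 :=
  Submodule.mem_sup.mp (hP.out.lt_iff.mp (left_lt_sup.mpr h) ▸ Submodule.mem_top)

theorem Ideal.left_ne_bot_of_span_singleton_eq_mul {R : Type*} [CommRing R] {p : R} (hp : p ≠ 0)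
    {I J : Ideal R} (h : Ideal.span {p} = I * J) : I ≠ ⊥ := by
  rintro rfl
  rw [Ideal.bot_mul, Ideal.span_singleton_eq_bot] at h
  exact hp h

theorem Ideal.eq_comap_of_eq_comap_of_involutive {R : Type*} [CommRing R] {τ : R ≃+* R}
    (hτ : ∀ c, τ (τ c) = c) {P Q : Ideal R} (h : P = Q.comap τ) : Q = P.comap τ := by
  ext c
  rw [h, Ideal.mem_comap, Ideal.mem_comap, hτ]

theorem eq_comap_mapRingEquiv_of_forall_mem_iff {k K : Type*} [Field k] [Field K] (e : k ≃+* K)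
    {P : Ideal (𝓞 k)} {Q : Ideal (𝓞 K)}
    (h : ∀ c, c ∈ P ↔ ∃ d ∈ Q, e (algebraMap (𝓞 k) k c) = algebraMap (𝓞 K) K d) :
    P = Q.comap (RingOfIntegers.mapRingEquiv e) := by
  ext c
  rw [h c, Ideal.mem_comap]
  refine ⟨fun ⟨d, hd, hcd⟩ => ?_, fun hc => ⟨_, hc, rfl⟩⟩
  rwa [show RingOfIntegers.mapRingEquiv e c = d from RingOfIntegers.coe_injective hcd]

theorem inv_smul_mul_inv_smul {B : Type*} [Ring B] [Algebra ℚ B] {κ : ℤ} {y : B}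
    (hyy : y * y = algebraMap ℚ B (-(κ : ℚ))) (q : ℚ) :
    (q⁻¹ • y) * (q⁻¹ • y) = algebraMap ℚ B (-((κ : ℚ) / q ^ 2)) := by
  rw [smul_mul_smul, hyy, Algebra.smul_def, ← map_mul]
  congr 1
  ring

section Quaternion

variable {k : Type*} [Field k] [Algebra ℚ k] {B : Type*} [Ring B] [Algebra ℚ B] (f : k →ₐ[ℚ] B)
  (σ : k ≃ₐ[ℚ] k) {κ : ℤ} {y : B}

theorem add_mul_mul_add_mul (hyy : y * y = algebraMap ℚ B (-(κ : ℚ)))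
    (hcomm : ∀ a : k, y * f a = f (σ a) * y) (a b c d : k) :
    (f a + f b * y) * (f c + f d * y)
      = f (a * c - κ * (b * σ d)) + f (a * d + b * σ c) * y := by
  have hyy' : y * y = f (-κ) := by rw [hyy, ← f.commutes]; simp
  have hyc : f b * y * f c = f (b * σ c) * y := by
    rw [mul_assoc, hcomm, ← mul_assoc, ← map_mul]
  have hyd : f b * y * (f d * y) = f (-κ * (b * σ d)) := by
    rw [← mul_assoc, mul_assoc (f b), hcomm, ← mul_assoc, ← map_mul, mul_assoc, hyy', ← map_mul]
    ring_nf
  rw [add_mul, mul_add, mul_add, hyc, hyd, ← mul_assoc, ← map_mul, ← map_mul, map_sub, map_add,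
    add_mul, neg_mul, map_neg, sub_eq_add_neg]
  abel

end Quaternion

section IdealInv

variable {k : Type*} [Field k] [NumberField k]

def idealInv (I : Ideal (𝓞 k)) : Submodule (𝓞 k) k where
  carrier := idealInvSet k I
  zero_mem' _ _ := ⟨0, by simp⟩
  add_mem' {b d} hb hd c hc := by
    obtain ⟨e₁, he₁⟩ := hb c hc
    obtain ⟨e₂, he₂⟩ := hd c hc
    exact ⟨e₁ + e₂, by rw [add_mul, he₁, he₂, map_add]⟩
  smul_mem' a b hb c hc := by
    obtain ⟨e, he⟩ := hb (a * c) (I.mul_mem_left a hc)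
    exact ⟨e, by rw [← he, map_mul, Algebra.smul_def]; ring⟩

theorem algebraMap_mem_idealInv (I : Ideal (𝓞 k)) (d : 𝓞 k) :
    algebraMap (𝓞 k) k d ∈ idealInv I :=
  fun c _ => ⟨d * c, (map_mul _ d c).symm⟩

theorem mul_mem_idealInv_mul {I J : Ideal (𝓞 k)} {b d : k} (hb : b ∈ idealInv I)
    (hd : d ∈ idealInv J) : b * d ∈ idealInv (I * J) := by
  intro z hz
  refine Submodule.mul_induction_on hz (fun p hp q hq => ?_) ?_
  · obtain ⟨e₁, he₁⟩ := hb p hp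
    obtain ⟨e₂, he₂⟩ := hd q hq
    exact ⟨e₁ * e₂, by rw [map_mul, map_mul, mul_mul_mul_comm, he₁, he₂]⟩
  · rintro _ _ ⟨e₁, he₁⟩ ⟨e₂, he₂⟩
    exact ⟨e₁ + e₂, by rw [map_add, mul_add, he₁, he₂, map_add]⟩

theorem isIntegral_mul_mul_of_mem_idealInv {I J : Ideal (𝓞 k)} {c : 𝓞 k} (hc : c ∈ I * J)
    {b d : k} (hb : b ∈ idealInv I) (hd : d ∈ idealInv J) :
    IsIntegral ℤ (algebraMap (𝓞 k) k c * (b * d)) := by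
  obtain ⟨e, he⟩ := mul_mem_idealInv_mul hb hd c hc
  rw [mul_comm, he]
  exact RingOfIntegers.isIntegral_coe e

theorem div_mem_idealInv {I J : Ideal (𝓞 k)} {p z : 𝓞 k} (hsplit : Ideal.span {p} = I * J)
    (hz : z ∈ J) : algebraMap (𝓞 k) k z / algebraMap (𝓞 k) k p ∈ idealInv I := by
  intro c hc
  obtain ⟨g, hg⟩ := Ideal.mem_span_singleton'.mp (hsplit ▸ Ideal.mul_mem_mul hc hz)
  rcases eq_or_ne p 0 with rfl | hp
  · exact ⟨0, by simp⟩
  · refine ⟨g, ?_⟩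
    have hp' : algebraMap (𝓞 k) k p ≠ 0 := (map_ne_zero_iff _ RingOfIntegers.coe_injective).mpr hp
    rw [div_mul_eq_mul_div, mul_comm, ← map_mul, ← hg, map_mul, mul_div_assoc, div_self hp',
      mul_one]

variable {K : Type*} [Field K] [NumberField K]

theorem map_mem_idealInv_comap (e : k ≃+* K) {I : Ideal (𝓞 K)} {b : k}
    (hb : b ∈ idealInv (I.comap (RingOfIntegers.mapRingEquiv e))) : e b ∈ idealInv I := by
  intro c hc
  set c' := (RingOfIntegers.mapRingEquiv e).symm c
  obtain ⟨d, hd⟩ := hb c' (by rw [Ideal.mem_comap, RingEquiv.apply_symm_apply]; exact hc)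
  refine ⟨RingOfIntegers.mapRingEquiv e d, ?_⟩
  have hc' : e (algebraMap (𝓞 k) k c') = algebraMap (𝓞 K) K c := by simp [c']
  rw [← hc', ← map_mul, hd]
  rfl

end IdealInv

section Lattice

variable {k : Type*} [Field k] [NumberField k] {B : Type*} [Ring B] [Algebra ℚ B]
  {f : k →ₐ[ℚ] B} {σ : k ≃ₐ[ℚ] k} {κ : ℤ} {y : B}

theorem latticeSet_mono {S T : Set k} (h : S ⊆ T) : latticeSet f y S ⊆ latticeSet f y T := by
  rintro _ ⟨a, b, hb, rfl⟩
  exact ⟨a, b, h hb, rfl⟩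

theorem mul_mem_latticeSet {S : Set k} {b : k} (hb : b ∈ S) : f b * y ∈ latticeSet f y S :=
  ⟨0, b, hb, by simp⟩

variable (S : Submodule (𝓞 k) k)

theorem exists_subring_coe_eq_latticeSet (hyy : y * y = algebraMap ℚ B (-(κ : ℚ)))
    (hcomm : ∀ a : k, y * f a = f (σ a) * y)
    (hS : ∀ b ∈ S, ∀ d ∈ S, IsIntegral ℤ ((κ : k) * (b * σ d))) :
    ∃ O : Subring B, (O : Set B) = latticeSet f y S := by
  refine ⟨{ carrier := latticeSet f y S
            one_mem' := ⟨1, 0, S.zero_mem, by simp⟩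
            zero_mem' := ⟨0, 0, S.zero_mem, by simp⟩
            add_mem' := ?_
            neg_mem' := ?_
            mul_mem' := ?_ }, rfl⟩
  · rintro _ _ ⟨a, b, hb, rfl⟩ ⟨c, d, hd, rfl⟩
    let σc : 𝓞 k := RingOfIntegers.mapRingEquiv (σ : k ≃+* k) c
    refine ⟨a * c - ⟨_, hS b hb d hd⟩, a • d + σc • b,
      S.add_mem (S.smul_mem a hd) (S.smul_mem σc hb), ?_⟩
    rw [add_mul_mul_add_mul f σ hyy hcomm, Algebra.smul_def, Algebra.smul_def, mul_comm _ b]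
    congr 3
  · rintro _ _ ⟨a, b, hb, rfl⟩ ⟨c, d, hd, rfl⟩
    refine ⟨a + c, b + d, S.add_mem hb hd, ?_⟩
    simp only [map_add, add_mul]
    abel
  · rintro _ ⟨a, b, hb, rfl⟩
    exact ⟨-a, -b, S.neg_mem hb, by rw [map_neg, map_neg, map_neg, neg_mul, neg_add]⟩

theorem isIntegral_of_mem_latticeSet (h2 : Module.finrank ℚ k = 2) (hσ : σ ≠ AlgEquiv.refl)
    (hσσ : ∀ x, σ (σ x) = x) (hyy : y * y = algebraMap ℚ B (-(κ : ℚ)))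
    (hcomm : ∀ a : k, y * f a = f (σ a) * y)
    (hS : ∀ b ∈ S, ∀ d ∈ S, IsIntegral ℤ ((κ : k) * (b * σ d)))
    {x : B} (hx : x ∈ latticeSet f y S) : IsIntegral ℤ x := by
  obtain ⟨a, b, hb, rfl⟩ := hx
  set α := algebraMap (𝓞 k) k a
  have hα : IsIntegral ℤ α := RingOfIntegers.isIntegral_coe a
  have hσα : IsIntegral ℤ (σ α) := map_isIntegral_int σ hα
  obtain ⟨t, ht⟩ := exists_intCast_eq_of_algEquiv_apply_eq h2 hσ (c := α + σ α)
    (by rw [map_add, hσσ, add_comm]) (hα.add hσα)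
  obtain ⟨n, hn⟩ := exists_intCast_eq_of_algEquiv_apply_eq h2 hσ
    (c := α * σ α + κ * (b * σ b)) (by simp only [map_add, map_mul, map_intCast, hσσ]; ring)
    ((hα.mul hσα).add (hS b hb b hb))
  refine isIntegral_of_mul_self_eq t n ?_
  rw [add_mul_mul_add_mul f σ hyy hcomm, ← map_intCast f t, ← map_intCast f n, ← ht, ← hn,
    show α * α - κ * (b * σ b) = (α + σ α) * α - (α * σ α + κ * (b * σ b)) by ring,
    show α * b + b * σ α = (α + σ α) * b by ring, map_sub, map_mul, map_mul, mul_add,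
    mul_assoc]
  abel

theorem exists_order_coe_eq_latticeSet (h2 : Module.finrank ℚ k = 2) (hσ : σ ≠ AlgEquiv.refl)
    (hσσ : ∀ x, σ (σ x) = x) (hyy : y * y = algebraMap ℚ B (-(κ : ℚ)))
    (hcomm : ∀ a : k, y * f a = f (σ a) * y)
    (hS : ∀ b ∈ S, ∀ d ∈ S, IsIntegral ℤ ((κ : k) * (b * σ d))) :
    ∃ O : Subring B, (O : Set B) = latticeSet f y S ∧ ∀ x ∈ O, IsIntegral ℤ x := by
  obtain ⟨O, hO⟩ := exists_subring_coe_eq_latticeSet S hyy hcomm hS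
  exact ⟨O, hO, fun x hx => isIntegral_of_mem_latticeSet S h2 hσ hσσ hyy hcomm hS (hO ▸ hx)⟩

theorem inv_natCast_smul_mem_of_add_eq_one {O : Subring B} {P Q : Ideal (𝓞 k)} {p : ℕ}
    (hsplit : Ideal.span {(p : 𝓞 k)} = P * Q) {w z : 𝓞 k} (hw : w ∈ P) (hz : z ∈ Q)
    (hwz : w + z = 1) (hOP : latticeSet f y (idealInv P) ⊆ O)
    (hOQ : latticeSet f y (idealInv Q) ⊆ O) : (p : ℚ)⁻¹ • y ∈ O := by
  set A := algebraMap (𝓞 k) k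
  have hy : f (A z / A p) * y + f (A w / A p) * y = (p : ℚ)⁻¹ • y := by
    rw [← add_mul, ← map_add, ← add_div, ← map_add, add_comm, hwz, map_one, map_natCast,
      Algebra.smul_def, one_div, ← map_natCast (algebraMap ℚ k), ← map_inv₀, f.commutes]
  exact hy ▸ add_mem (hOP (mul_mem_latticeSet (div_mem_idealInv hsplit hz)))
    (hOQ (mul_mem_latticeSet (div_mem_idealInv (hsplit.trans (mul_comm P Q)) hw)))

end Lattice

theorem stmt16_general (k : Type*) [Field k] [NumberField k]
    (h2 : Module.finrank ℚ k = 2)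
    (B : Type*) [Ring B] [Algebra ℚ B]
    (f : k →ₐ[ℚ] B) (hf : Function.Injective f)
    (σ : k ≃ₐ[ℚ] k) (hσ : ∀ x : k, σ (σ x) = x)
    (κ : ℤ) (y : B)
    (hyy : y * y = algebraMap ℚ B (-(κ : ℚ)))
    (hcomm : ∀ a : k, y * f a = f (σ a) * y)
    (p₀ : ℕ) (hp₀ : p₀.Prime)
    (hκ1 : (p₀ : ℤ) ∣ κ) (hκ2 : ¬ ((p₀ : ℤ) ^ 2 ∣ κ))
    (P Q : Ideal (𝓞 k)) (hP : P.IsPrime) (hPQ : P ≠ Q)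
    (hsplit : Ideal.span {(p₀ : 𝓞 k)} = P * Q)
    (hconj : ∀ c : 𝓞 k, c ∈ P ↔ ∃ d ∈ Q, σ (algebraMap (𝓞 k) k c) = algebraMap (𝓞 k) k d) :
    -- `R' = 𝓞ₖ ⊕ ℘₀⁻¹·y` and `R'' = 𝓞ₖ ⊕ ℘̄₀⁻¹·y` are orders containing `R = 𝓞ₖ ⊕ 𝓞ₖ·y`:
    (∃ O' : Subring B, (O' : Set B) = latticeSet f y (idealInvSet k P) ∧
        ∀ x ∈ O', IsIntegral ℤ x) ∧
    (∃ O'' : Subring B, (O'' : Set B) = latticeSet f y (idealInvSet k Q) ∧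
        ∀ x ∈ O'', IsIntegral ℤ x) ∧
    latticeSet f y {b : k | ∃ d : 𝓞 k, b = algebraMap (𝓞 k) k d}
      ⊆ latticeSet f y (idealInvSet k P) ∧
    latticeSet f y {b : k | ∃ d : 𝓞 k, b = algebraMap (𝓞 k) k d}
      ⊆ latticeSet f y (idealInvSet k Q) ∧
    -- no single order contains both `R'` and `R''`:
    (¬ ∃ O : Subring B, (∀ x ∈ O, IsIntegral ℤ x) ∧
        latticeSet f y (idealInvSet k P) ⊆ (O : Set B) ∧
        latticeSet f y (idealInvSet k Q) ⊆ (O : Set B)) ∧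
    -- indeed `Q(p₀⁻¹ y) = κ/p₀² ∉ ℤ`:
    (((p₀ : ℚ)⁻¹ • y) * ((p₀ : ℚ)⁻¹ • y) = algebraMap ℚ B (-((κ : ℚ) / (p₀ : ℚ) ^ 2)) ∧
      ¬ ∃ n : ℤ, (κ : ℚ) / (p₀ : ℚ) ^ 2 = (n : ℚ)) := by
  set τ := RingOfIntegers.mapRingEquiv (σ : k ≃+* k)
  have hPτ : P = Q.comap τ := eq_comap_mapRingEquiv_of_forall_mem_iff _ hconj
  have hQτ : Q = P.comap τ :=
    Ideal.eq_comap_of_eq_comap_of_involutive (fun c => RingOfIntegers.coe_injective (hσ c)) hPτ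
  have hσ1 : σ ≠ AlgEquiv.refl := by
    rintro rfl
    exact hPQ (hPτ.trans (Ideal.comap_id Q))
  have hκPQ : (κ : 𝓞 k) ∈ P * Q := by
    rw [← hsplit, Ideal.mem_span_singleton]
    simpa using map_dvd (Int.castRingHom (𝓞 k)) hκ1
  have hR' : ∀ b ∈ idealInv P, ∀ d ∈ idealInv P, IsIntegral ℤ ((κ : k) * (b * σ d)) :=
    fun b hb d hd => by
      simpa using isIntegral_mul_mul_of_mem_idealInv hκPQ hb
        (map_mem_idealInv_comap (σ : k ≃+* k) (hPτ ▸ hd))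
  have hR'' : ∀ b ∈ idealInv Q, ∀ d ∈ idealInv Q, IsIntegral ℤ ((κ : k) * (b * σ d)) :=
    fun b hb d hd => by
      simpa [mul_comm b] using isIntegral_mul_mul_of_mem_idealInv hκPQ
        (map_mem_idealInv_comap (σ : k ≃+* k) (hQτ ▸ hd)) hb
  have hnotint : ¬ ∃ n : ℤ, (κ : ℚ) / (p₀ : ℚ) ^ 2 = n := fun ⟨n, hn⟩ =>
    intCast_div_sq_ne_intCast (by exact_mod_cast hp₀.ne_zero) hκ2 n (by exact_mod_cast hn)
  refine ⟨exists_order_coe_eq_latticeSet _ h2 hσ1 hσ hyy hcomm hR',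
    exists_order_coe_eq_latticeSet _ h2 hσ1 hσ hyy hcomm hR'',
    latticeSet_mono fun b ⟨d, hd⟩ => hd ▸ algebraMap_mem_idealInv P d,
    latticeSet_mono fun b ⟨d, hd⟩ => hd ▸ algebraMap_mem_idealInv Q d, ?_,
    inv_smul_mul_inv_smul hyy _, hnotint⟩
  rintro ⟨O, hOint, hOP, hOQ⟩
  have hPbot : P ≠ ⊥ := Ideal.left_ne_bot_of_span_singleton_eq_mul
    (Nat.cast_ne_zero.mpr hp₀.ne_zero) hsplit
  have hQP : ¬ Q ≤ P := fun hle =>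
    hPQ (le_antisymm (hPτ.trans_le ((Ideal.comap_mono hle).trans_eq hQτ.symm)) hle)
  obtain ⟨w, hw, z, hz, hwz⟩ := Ideal.exists_add_eq_one_of_not_le (hP.isMaximal hPbot) hQP
  have hyO := inv_natCast_smul_mem_of_add_eq_one hsplit hw hz hwz hOP hOQ
  have : Nontrivial B := hf.nontrivial
  obtain ⟨n, hn⟩ := exists_intCast_eq_of_isIntegral_algebraMap
    (inv_smul_mul_inv_smul hyy (p₀ : ℚ) ▸ hOint _ (mul_mem hyO hyO))
  exact hnotint ⟨-n, by rw [Int.cast_neg, ← hn, neg_neg]⟩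

theorem stmt16 (k : Type*) [Field k] [NumberField k]
    (h2 : Module.finrank ℚ k = 2)
    (him : ∀ v : NumberField.InfinitePlace k, v.IsComplex)
    (B : Type*) [Ring B] [Algebra ℚ B]
    (f : k →ₐ[ℚ] B) (hf : Function.Injective f)
    (σ : k ≃ₐ[ℚ] k) (hσ : ∀ x : k, σ (σ x) = x)
    (κ : ℤ) (y : B)
    (hyy : y * y = algebraMap ℚ B (-(κ : ℚ)))
    (hcomm : ∀ a : k, y * f a = f (σ a) * y)
    (p₀ : ℕ) (hp₀ : p₀.Prime)
    (hκ1 : (p₀ : ℤ) ∣ κ) (hκ2 : ¬ ((p₀ : ℤ) ^ 2 ∣ κ))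
    (P Q : Ideal (𝓞 k)) (hP : P.IsPrime) (hQ : Q.IsPrime) (hPQ : P ≠ Q)
    (hsplit : Ideal.span {(p₀ : 𝓞 k)} = P * Q)
    (hconj : ∀ c : 𝓞 k, c ∈ P ↔ ∃ d ∈ Q, σ (algebraMap (𝓞 k) k c) = algebraMap (𝓞 k) k d) :
    -- `R' = 𝓞ₖ ⊕ ℘₀⁻¹·y` and `R'' = 𝓞ₖ ⊕ ℘̄₀⁻¹·y` are orders containing `R = 𝓞ₖ ⊕ 𝓞ₖ·y`:
    (∃ O' : Subring B, (O' : Set B) = latticeSet f y (idealInvSet k P) ∧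
        ∀ x ∈ O', IsIntegral ℤ x) ∧
    (∃ O'' : Subring B, (O'' : Set B) = latticeSet f y (idealInvSet k Q) ∧
        ∀ x ∈ O'', IsIntegral ℤ x) ∧
    latticeSet f y {b : k | ∃ d : 𝓞 k, b = algebraMap (𝓞 k) k d}
      ⊆ latticeSet f y (idealInvSet k P) ∧
    latticeSet f y {b : k | ∃ d : 𝓞 k, b = algebraMap (𝓞 k) k d}
      ⊆ latticeSet f y (idealInvSet k Q) ∧
    -- no single order contains both `R'` and `R''`:
    (¬ ∃ O : Subring B, (∀ x ∈ O, IsIntegral ℤ x) ∧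
        latticeSet f y (idealInvSet k P) ⊆ (O : Set B) ∧
        latticeSet f y (idealInvSet k Q) ⊆ (O : Set B)) ∧
    -- indeed `Q(p₀⁻¹ y) = κ/p₀² ∉ ℤ`:
    (((p₀ : ℚ)⁻¹ • y) * ((p₀ : ℚ)⁻¹ • y) = algebraMap ℚ B (-((κ : ℚ) / (p₀ : ℚ) ^ 2)) ∧
      ¬ ∃ n : ℤ, (κ : ℚ) / (p₀ : ℚ) ^ 2 = (n : ℚ)) :=
  stmt16_general k h2 B f hf σ hσ κ y hyy hcomm p₀ hp₀ hκ1 hκ2 P Q hP hPQ hsplit hconj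
end
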